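/- arXiv:2304.03557 — 6 statements merged into one kernel-verified Lean document; each statement's English description precedes it below -/
import Mathlib

section
/- Let f_i : ℝ^d → ℝ (i = 1,…,m) be differentiable, μ_i-strongly convex and L_i-smooth with 0 < μ_i ≤ L_i, and let g : ℝ^d → ℝ be convex. Fix y, z ∈ ℝ^d and x ∈ ℝ^{md}, and write y⃗ = (y,…,y), z⃗ = (z,…,z) ∈ ℝ^{md}. Then F(z⃗) + G(z⃗) ≥ [ F(x) + G(x) + ⟨∇F(x), y⃗ − x⟩ + (μ_l/2 − L_l²/μ_g)‖x − y⃗‖² ] + [ ⟨P∇F(x), z⃗ − y⃗⟩ + G(z⃗) − G(x) ] + (μ_g/4)‖z⃗ − y⃗‖². -/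
open scoped RealInnerProductSpace BigOperators

/-- The space ℝ^{md} of `m` stacked blocks of ℝ^d, with the Euclidean norm. -/
abbrev Vec (m d : ℕ) := PiLp 2 fun _ : Fin m => EuclideanSpace ℝ (Fin d)

/-- Lift a vector of ℝ^d to the consensus point (y, …, y) ∈ ℝ^{md}. -/
def liftVec (m d : ℕ) (y : EuclideanSpace ℝ (Fin d)) : Vec m d := WithLp.toLp 2 (fun _ => y)

/-- F(x) = ∑ᵢ fᵢ(xᵢ). -/
noncomputable def Fsum (m d : ℕ) (f : Fin m → EuclideanSpace ℝ (Fin d) → ℝ)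
    (x : Vec m d) : ℝ := ∑ i, f i (x i)

/-- G(x) = ∑ᵢ g(xᵢ). -/
noncomputable def Gsum (m d : ℕ) (g : EuclideanSpace ℝ (Fin d) → ℝ)
    (x : Vec m d) : ℝ := ∑ i, g (x i)

/-- ∇F(x) = (∇f₁(x₁), …, ∇f_m(x_m)). -/
noncomputable def gradF (m d : ℕ) (f : Fin m → EuclideanSpace ℝ (Fin d) → ℝ)
    (x : Vec m d) : Vec m d := WithLp.toLp 2 (fun i => gradient (f i) (x i))

/-- P = (1/m)(11ᵀ ⊗ I_d) : the orthogonal projection onto the consensus subspace. -/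
noncomputable def consP (m d : ℕ) (x : Vec m d) : Vec m d :=
  WithLp.toLp 2 (fun _ => (m : ℝ)⁻¹ • ∑ j, x j)

/-- the lower-bound estimate (inequality (5) of the paper). -/
theorem stmt1 (d m : ℕ) (hm : 0 < m)
    (f : Fin m → EuclideanSpace ℝ (Fin d) → ℝ) (μ L : Fin m → ℝ)
    (hμpos : ∀ i, 0 < μ i) (hμL : ∀ i, μ i ≤ L i)
    (hdiff : ∀ i, Differentiable ℝ (f i))
    (hsc : ∀ i (a b : EuclideanSpace ℝ (Fin d)),
      f i a + ⟪gradient (f i) a, b - a⟫ + μ i / 2 * ‖b - a‖ ^ 2 ≤ f i b)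
    (hsm : ∀ i (a b : EuclideanSpace ℝ (Fin d)),
      f i b ≤ f i a + ⟪gradient (f i) a, b - a⟫ + L i / 2 * ‖b - a‖ ^ 2)
    (g : EuclideanSpace ℝ (Fin d) → ℝ) (hg : ConvexOn ℝ Set.univ g)
    (y z : EuclideanSpace ℝ (Fin d)) (x : Vec m d)
    (Ll μl Lg μg : ℝ)
    (hLl : IsGreatest (Set.range L) Ll)
    (hμl : IsLeast (Set.range μ) μl)
    (hLg : Lg = (1 / (m : ℝ)) * ∑ i, L i)
    (hμg : μg = (1 / (m : ℝ)) * ∑ i, μ i) :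
    Fsum m d f (liftVec m d z) + Gsum m d g (liftVec m d z) ≥
      (Fsum m d f x + Gsum m d g x + ⟪gradF m d f x, liftVec m d y - x⟫
        + (μl / 2 - Ll ^ 2 / μg) * ‖x - liftVec m d y‖ ^ 2)
      + (⟪consP m d (gradF m d f x), liftVec m d z - liftVec m d y⟫
        + Gsum m d g (liftVec m d z) - Gsum m d g x)
      + μg / 4 * ‖liftVec m d z - liftVec m d y‖ ^ 2 := by
  have hm' : (m : ℝ) ≠ 0 := Nat.cast_ne_zero.mpr hm.ne'
  set C := μl / 2 - Ll ^ 2 / μg with hC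
  -- basic scalar facts
  have hmpos : (0:ℝ) < m := Nat.cast_pos.mpr hm
  have hμgpos : 0 < μg := by
    rw [hμg]
    exact mul_pos (by positivity) (Finset.sum_pos (fun i _ => hμpos i) ⟨⟨0, hm⟩, Finset.mem_univ _⟩)
  have hLlub : ∀ i, L i ≤ Ll := fun i => hLl.2 ⟨i, rfl⟩
  have hμllb : ∀ i, μl ≤ μ i := fun i => hμl.2 ⟨i, rfl⟩
  have hμgLl : μg ≤ Ll := by
    rw [hμg]
    rw [div_mul_eq_mul_div, div_le_iff₀ (by positivity), one_mul]
    calc ∑ i, μ i ≤ ∑ i : Fin m, Ll := Finset.sum_le_sum fun i _ => (hμL i).trans (hLlub i)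
    _ = Ll * m := by simp [mul_comm]
  have hLlpos : 0 < Ll := lt_of_lt_of_le hμgpos hμgLl
  have hLl2 : Ll ≤ Ll ^ 2 / μg := by
    rw [le_div_iff₀ hμgpos, pow_two]
    exact mul_le_mul_of_nonneg_left hμgLl hLlpos.le
  -- per-index key inequality
  have key : ∀ i : Fin m,
      f i (x i) + ⟪gradient (f i) (x i), y - x i⟫ + C * ‖x i - y‖ ^ 2
        + ⟪gradient (f i) (x i), z - y⟫ + μ i / 4 * ‖z - y‖ ^ 2 ≤ f i z := by
    intro i
    have hinner : ⟪gradient (f i) (x i), y - x i⟫ + ⟪gradient (f i) (x i), z - y⟫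
        = ⟪gradient (f i) (x i), z - x i⟫ := by
      rw [← inner_add_right]
      congr 1
      abel
    have hs := hsc i (x i) z
    have htri : ‖z - y‖ ≤ ‖z - x i‖ + ‖x i - y‖ := by
      calc ‖z - y‖ = ‖(z - x i) + (x i - y)‖ := by congr 1; abel
      _ ≤ _ := norm_add_le _ _
    have hb : ‖z - y‖ ^ 2 ≤ 2 * ‖z - x i‖ ^ 2 + 2 * ‖x i - y‖ ^ 2 := by
      nlinarith [norm_nonneg (z - x i), norm_nonneg (x i - y), norm_nonneg (z - y),
        mul_self_le_mul_self (norm_nonneg (z - y)) htri,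
        sq_nonneg (‖z - x i‖ - ‖x i - y‖)]
    have hcoef : C + μ i / 2 ≤ 0 := by
      have h1 : μl ≤ Ll := (hμllb i).trans ((hμL i).trans (hLlub i))
      have h2 : μ i ≤ Ll := (hμL i).trans (hLlub i)
      rw [hC]; nlinarith
    have hμi := (hμpos i).le
    nlinarith [sq_nonneg (‖x i - y‖), sq_nonneg (‖z - x i‖)]
  -- expansions
  have e2 : ‖x - liftVec m d y‖ ^ 2 = ∑ i, ‖x i - y‖ ^ 2 := by
    rw [PiLp.norm_sq_eq_of_L2]
    rfl
  have e4 : ‖liftVec m d z - liftVec m d y‖ ^ 2 = ∑ _i : Fin m, ‖z - y‖ ^ 2 := by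
    rw [PiLp.norm_sq_eq_of_L2]
    rfl
  have e1 : ⟪gradF m d f x, liftVec m d y - x⟫ = ∑ i, ⟪gradient (f i) (x i), y - x i⟫ := by
    rw [PiLp.inner_apply]
    rfl
  have e3 : ⟪consP m d (gradF m d f x), liftVec m d z - liftVec m d y⟫
      = ∑ i, ⟪gradient (f i) (x i), z - y⟫ := by
    rw [PiLp.inner_apply]
    have : ∀ i : Fin m, ⟪consP m d (gradF m d f x) i, (liftVec m d z - liftVec m d y) i⟫
        = (m : ℝ)⁻¹ * ∑ j, ⟪gradient (f j) (x j), z - y⟫ := by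
      intro i
      show ⟪(m : ℝ)⁻¹ • ∑ j, gradient (f j) (x j), z - y⟫ = _
      rw [real_inner_smul_left, sum_inner]
    rw [Finset.sum_congr rfl fun i _ => this i, Finset.sum_const, Finset.card_univ,
      Fintype.card_fin, nsmul_eq_mul]
    field_simp
  have e4' : μg / 4 * ‖liftVec m d z - liftVec m d y‖ ^ 2 = ∑ i, μ i / 4 * ‖z - y‖ ^ 2 := by
    rw [e4, Finset.sum_const, Finset.card_univ, Fintype.card_fin, nsmul_eq_mul]
    have : ∑ i, μ i / 4 * ‖z - y‖ ^ 2 = (∑ i, μ i) * (‖z - y‖ ^ 2 / 4) := by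
      rw [Finset.sum_mul]
      exact Finset.sum_congr rfl fun i _ => by ring
    rw [this, hμg]
    field_simp
  have hsum : ∑ i, (f i (x i) + ⟪gradient (f i) (x i), y - x i⟫ + C * ‖x i - y‖ ^ 2
        + ⟪gradient (f i) (x i), z - y⟫ + μ i / 4 * ‖z - y‖ ^ 2) ≤ ∑ i, f i z :=
    Finset.sum_le_sum fun i _ => key i
  have hFz : Fsum m d f (liftVec m d z) = ∑ i, f i z := rfl
  have hFx : Fsum m d f x = ∑ i, f i (x i) := rfl
  simp only [Finset.sum_add_distrib, ← Finset.mul_sum] at hsum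
  rw [ge_iff_le, hFz, hFx, e1, e2, e3, e4']
  linarith
end

section
/- Let f_i : ℝ^d → ℝ (i = 1,…,m) be differentiable, μ_i-strongly convex and L_i-smooth with 0 < μ_i ≤ L_i, and let g : ℝ^d → ℝ be convex. Fix y, z ∈ ℝ^d and x ∈ ℝ^{md}, and write y⃗ = (y,…,y), z⃗ = (z,…,z) ∈ ℝ^{md}. Then F(z⃗) + G(z⃗) ≤ [ F(x) + G(x) + ⟨∇F(x), y⃗ − x⟩ + (μ_l/2 − L_l²/μ_g)‖y⃗ − x‖² ] + [ ⟨P∇F(x), z⃗ − y⃗⟩ + G(z⃗) − G(x) ] + L_g‖z⃗ − y⃗‖² + ( L_l²/(2L_g) + L_l²/μ_g − μ_l/2 + L_l/2 )‖y⃗ − x‖². -/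
open scoped RealInnerProductSpace BigOperators

/-- the upper-bound estimate (inequality (6) of the paper). -/
theorem stmt2 (d m : ℕ) (hm : 0 < m)
    (f : Fin m → EuclideanSpace ℝ (Fin d) → ℝ) (μ L : Fin m → ℝ)
    (hμpos : ∀ i, 0 < μ i) (hμL : ∀ i, μ i ≤ L i)
    (hdiff : ∀ i, Differentiable ℝ (f i))
    (hsc : ∀ i (a b : EuclideanSpace ℝ (Fin d)),
      f i a + ⟪gradient (f i) a, b - a⟫ + μ i / 2 * ‖b - a‖ ^ 2 ≤ f i b)
    (hsm : ∀ i (a b : EuclideanSpace ℝ (Fin d)),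
      f i b ≤ f i a + ⟪gradient (f i) a, b - a⟫ + L i / 2 * ‖b - a‖ ^ 2)
    (g : EuclideanSpace ℝ (Fin d) → ℝ) (hg : ConvexOn ℝ Set.univ g)
    (y z : EuclideanSpace ℝ (Fin d)) (x : Vec m d)
    (Ll μl Lg μg : ℝ)
    (hLl : IsGreatest (Set.range L) Ll)
    (hμl : IsLeast (Set.range μ) μl)
    (hLg : Lg = (1 / (m : ℝ)) * ∑ i, L i)
    (hμg : μg = (1 / (m : ℝ)) * ∑ i, μ i) :
    Fsum m d f (liftVec m d z) + Gsum m d g (liftVec m d z) ≤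
      (Fsum m d f x + Gsum m d g x + ⟪gradF m d f x, liftVec m d y - x⟫
        + (μl / 2 - Ll ^ 2 / μg) * ‖liftVec m d y - x‖ ^ 2)
      + (⟪consP m d (gradF m d f x), liftVec m d z - liftVec m d y⟫
        + Gsum m d g (liftVec m d z) - Gsum m d g x)
      + Lg * ‖liftVec m d z - liftVec m d y‖ ^ 2
      + (Ll ^ 2 / (2 * Lg) + Ll ^ 2 / μg - μl / 2 + Ll / 2) * ‖liftVec m d y - x‖ ^ 2 := by
  have hmne : (m:ℝ) ≠ 0 := Nat.cast_ne_zero.mpr hm.ne'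
  have hne : Nonempty (Fin m) := ⟨⟨0, hm⟩⟩
  have hLpos : ∀ i, 0 < L i := fun i => lt_of_lt_of_le (hμpos i) (hμL i)
  have hLlpos : 0 < Ll := lt_of_lt_of_le (hLpos (Classical.arbitrary _))
    (hLl.2 ⟨Classical.arbitrary _, rfl⟩)
  have hLgpos : 0 < Lg := by
    rw [hLg]
    have : 0 < ∑ i, L i := Finset.sum_pos (fun i _ => hLpos i) Finset.univ_nonempty
    positivity
  have hsum_le : ∑ i, L i ≤ m * Ll := by
    calc ∑ i, L i ≤ ∑ _i : Fin m, Ll := Finset.sum_le_sum (fun i _ => hLl.2 ⟨i, rfl⟩)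
      _ = m * Ll := by simp [Finset.sum_const, nsmul_eq_mul]
  have hLgLl : Lg ≤ Ll := by
    rw [hLg]
    calc (1/(m:ℝ)) * ∑ i, L i ≤ (1/(m:ℝ)) * (m * Ll) :=
          mul_le_mul_of_nonneg_left hsum_le (by positivity)
      _ = Ll := by field_simp
  -- block-wise norms and inner products
  have hnormsq : ∀ v : Vec m d, ‖v‖^2 = ∑ i, ‖v i‖^2 := by
    intro v
    rw [← real_inner_self_eq_norm_sq, PiLp.inner_apply]
    exact Finset.sum_congr rfl fun i _ => real_inner_self_eq_norm_sq _
  -- per-block key inequality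
  have key : ∀ i, f i z ≤ f i (x i) + ⟪gradient (f i) (x i), y - x i⟫
      + ⟪gradient (f i) (x i), z - y⟫ + L i * ‖z - y‖^2 + Ll * ‖y - x i‖^2 := by
    intro i
    have h1 := hsm i (x i) z
    have hsplit : ⟪gradient (f i) (x i), z - x i⟫
        = ⟪gradient (f i) (x i), y - x i⟫ + ⟪gradient (f i) (x i), z - y⟫ := by
      rw [← inner_add_right]
      congr 1
      abel
    have hnorm : ‖z - x i‖^2 ≤ 2*‖z-y‖^2 + 2*‖y - x i‖^2 := by
      have h2 : ‖z - x i‖ ≤ ‖z - y‖ + ‖y - x i‖ := by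
        calc ‖z - x i‖ = ‖(z - y) + (y - x i)‖ := by rw [sub_add_sub_cancel]
          _ ≤ _ := norm_add_le _ _
      nlinarith [norm_nonneg (z - x i), norm_nonneg (z - y), norm_nonneg (y - x i),
        sq_nonneg (‖z-y‖ - ‖y - x i‖)]
    have hLi : L i ≤ Ll := hLl.2 ⟨i, rfl⟩
    nlinarith [mul_le_mul_of_nonneg_left hnorm (le_of_lt (half_pos (hLpos i))),
      mul_nonneg (sub_nonneg.2 hLi) (sq_nonneg ‖y - x i‖)]
  -- summed inequality
  have hFsum : Fsum m d f (liftVec m d z) ≤ Fsum m d f x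
      + (∑ i, ⟪gradient (f i) (x i), y - x i⟫)
      + (∑ i, ⟪gradient (f i) (x i), z - y⟫)
      + (∑ i, L i) * ‖z - y‖^2 + Ll * ∑ i, ‖y - x i‖^2 := by
    have h := Finset.sum_le_sum (s := Finset.univ) (fun i _ => key i)
    simp only [Finset.sum_add_distrib, ← Finset.sum_mul, ← Finset.mul_sum] at h
    simpa [Fsum, liftVec] using h
  -- identify the inner products / norms
  have hinner1 : ⟪gradF m d f x, liftVec m d y - x⟫
      = ∑ i, ⟪gradient (f i) (x i), y - x i⟫ := by
    rw [PiLp.inner_apply]; rfl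
  have hP : ⟪consP m d (gradF m d f x), liftVec m d z - liftVec m d y⟫
      = ∑ j, ⟪gradient (f j) (x j), z - y⟫ := by
    have h1 : ∀ i : Fin m, ⟪(consP m d (gradF m d f x)) i,
        (liftVec m d z - liftVec m d y) i⟫
        = (m:ℝ)⁻¹ * ∑ j, ⟪gradient (f j) (x j), z - y⟫ := by
      intro i
      show ⟪(m:ℝ)⁻¹ • ∑ j, gradient (f j) (x j), z - y⟫ = _
      rw [real_inner_smul_left, sum_inner]
    rw [PiLp.inner_apply]
    simp only [h1, Finset.sum_const, Finset.card_univ, Fintype.card_fin, nsmul_eq_mul]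
    field_simp
  have hA : ‖liftVec m d y - x‖^2 = ∑ i, ‖y - x i‖^2 := by
    rw [hnormsq]; rfl
  have hB : ‖liftVec m d z - liftVec m d y‖^2 = (m:ℝ) * ‖z - y‖^2 := by
    rw [hnormsq]
    show (∑ _i : Fin m, ‖z - y‖^2) = _
    simp [Finset.sum_const, nsmul_eq_mul]
  -- coefficient facts
  have hAnn : (0:ℝ) ≤ ∑ i, ‖y - x i‖^2 :=
    Finset.sum_nonneg fun i _ => sq_nonneg _
  have hLl_le : Ll ≤ Ll^2/(2*Lg) + Ll/2 := by
    have h2 : Ll/2 ≤ Ll^2/(2*Lg) := by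
      rw [div_le_div_iff₀ (by norm_num) (by positivity)]
      nlinarith [mul_le_mul_of_nonneg_left hLgLl hLlpos.le]
    linarith
  have hmul : Ll * ∑ i, ‖y - x i‖^2 ≤ (Ll^2/(2*Lg) + Ll/2) * ∑ i, ‖y - x i‖^2 :=
    mul_le_mul_of_nonneg_right hLl_le hAnn
  have hsumL : (∑ i, L i) * ‖z - y‖^2 = Lg * ((m:ℝ) * ‖z - y‖^2) := by
    rw [hLg]; field_simp
  have hc : (μl/2 - Ll^2/μg) * ‖liftVec m d y - x‖^2
      + (Ll^2/(2*Lg) + Ll^2/μg - μl/2 + Ll/2) * ‖liftVec m d y - x‖^2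
      = (Ll^2/(2*Lg) + Ll/2) * ‖liftVec m d y - x‖^2 := by ring
  have hAeq : (Ll^2/(2*Lg) + Ll/2) * ‖liftVec m d y - x‖^2
      = (Ll^2/(2*Lg) + Ll/2) * ∑ i, ‖y - x i‖^2 := by rw [hA]
  rw [hinner1, hP, hB]
  linarith [hFsum, hmul, hsumL.le, hsumL.ge, hc, hAeq]
end

section
/- Let Q ⊆ ℝ^d be a nonempty closed convex set, g : ℝ^d → ℝ continuous convex, γ ≥ 0 with γ > 0 in the prox, and let prox denote the proximal operator of G(y) = Σ_{i=1}^m g(y_i) over Q^m. Let P be the orthogonal projection of ℝ^{md} onto the consensus subspace L = {x : x_1 = ⋯ = x_m}, and let M : ℝ^{md} → ℝ^{md} be a linear map with MP = PM = P and ‖M − P‖ ≤ λ for some λ ≥ 0. Let μ ≥ 0 and 0 ≤ μγ ≤ 1. Suppose y, u, ŷ, û ∈ ℝ^{md} satisfy ŷ = Pŷ, û = Pû, ‖y − ŷ‖ ≤ β and ‖u − û‖ ≤ β for some β ≥ 0, and let w ∈ ℝ^{md} be arbitrary (playing the role of ∇F(y)). Define v = μγ y + (1 − μγ) u − γ w and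 v̂ = μγ ŷ + (1 − μγ) û − γ P w. Then ‖prox(Mv) − prox(v̂)‖ ≤ (1 + λ)β + λγ‖w‖. -/
open scoped RealInnerProductSpace BigOperators

section Aux

variable {E : Type*} [NormedAddCommGroup E] [InnerProductSpace ℝ E]

lemma aux_normsq_combo (x y s : E) (t : ℝ) :
    ‖(1-t)•x + t•y - s‖^2 = (1-t)*‖x-s‖^2 + t*‖y-s‖^2 - t*(1-t)*‖x-y‖^2 := by
  have h : (1-t)•x + t•y - s = (1-t)•(x-s) + t•(y-s) := by module
  rw [h]
  simp only [← real_inner_self_eq_norm_sq, inner_add_left, inner_add_right, inner_sub_left,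
    inner_sub_right, real_inner_smul_left, real_inner_smul_right, real_inner_comm]
  ring

lemma aux_inner_identity (x y a b : E) :
    ‖y-a‖^2 - ‖x-a‖^2 + ‖x-b‖^2 - ‖y-b‖^2 = 2*⟪x-y, a-b⟫ := by
  simp only [← real_inner_self_eq_norm_sq, inner_sub_left, inner_sub_right, real_inner_comm]
  ring

lemma prox_growth {K : Set E} (hK : Convex ℝ K) {G : E → ℝ} (hG : ConvexOn ℝ K G)
    {c : ℝ} (hc : 0 < c) (prox : E → E)
    (hprox : ∀ s, prox s ∈ K ∧ ∀ q ∈ K, q ≠ prox s →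
      G (prox s) + c * ‖prox s - s‖ ^ 2 < G q + c * ‖q - s‖ ^ 2)
    (s : E) {q : E} (hq : q ∈ K) :
    G (prox s) + c * ‖prox s - s‖ ^ 2 + c * ‖q - prox s‖ ^ 2 ≤ G q + c * ‖q - s‖ ^ 2 := by
  set p := prox s with hp
  have hpK := (hprox s).1
  have step : ∀ t : ℝ, 0 < t → t ≤ 1 →
      G p + c * ‖p - s‖ ^ 2 + c * (1 - t) * ‖q - p‖ ^ 2 ≤ G q + c * ‖q - s‖ ^ 2 := by
    intro t ht0 ht1
    set qt := (1-t) • p + t • q with hqt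
    have hqtK : qt ∈ K := hK hpK hq (by linarith) ht0.le (by ring)
    have hmin : G p + c * ‖p - s‖ ^ 2 ≤ G qt + c * ‖qt - s‖ ^ 2 := by
      by_cases h : qt = p
      · rw [h]
      · exact ((hprox s).2 qt hqtK h).le
    have hGconv : G qt ≤ (1-t) * G p + t * G q := hG.2 hpK hq (by linarith) ht0.le (by ring)
    have hnorm := aux_normsq_combo p q s t
    have hrev : ‖q - p‖ = ‖p - q‖ := norm_sub_rev _ _
    have h2 : t * (G p + c * ‖p - s‖ ^ 2 + c * (1 - t) * ‖q - p‖ ^ 2)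
        ≤ t * (G q + c * ‖q - s‖ ^ 2) := by
      rw [hrev]; nlinarith [hmin, hGconv, hnorm]
    exact le_of_mul_le_mul_left h2 ht0
  have h0 : Filter.Tendsto (fun n : ℕ => 1/((n:ℝ)+1)) Filter.atTop (nhds 0) :=
    tendsto_one_div_add_atTop_nhds_zero_nat
  have lim : Filter.Tendsto
      (fun n : ℕ => G p + c * ‖p - s‖ ^ 2 + c * (1 - 1/((n:ℝ)+1)) * ‖q - p‖ ^ 2)
      Filter.atTop (nhds (G p + c * ‖p - s‖ ^ 2 + c * ‖q - p‖ ^ 2)) := by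
    have h1 : Filter.Tendsto (fun n : ℕ => c * (1 - 1/((n:ℝ)+1)) * ‖q - p‖ ^ 2)
        Filter.atTop (nhds (c * (1 - 0) * ‖q - p‖ ^ 2)) :=
      ((h0.const_sub 1).const_mul c).mul_const _
    have h2 := h1.const_add (G p + c * ‖p - s‖ ^ 2)
    simpa using h2
  refine le_of_tendsto' lim fun n => step (1/((n:ℝ)+1)) ?_ ?_
  · positivity
  · rw [div_le_one (by positivity)]; linarith [Nat.cast_nonneg (α := ℝ) n]

lemma prox_nonexpansive {K : Set E} (hK : Convex ℝ K) {G : E → ℝ} (hG : ConvexOn ℝ K G)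
    {c : ℝ} (hc : 0 < c) (prox : E → E)
    (hprox : ∀ s, prox s ∈ K ∧ ∀ q ∈ K, q ≠ prox s →
      G (prox s) + c * ‖prox s - s‖ ^ 2 < G q + c * ‖q - s‖ ^ 2)
    (a b : E) : ‖prox a - prox b‖ ≤ ‖a - b‖ := by
  have k1 := prox_growth hK hG hc prox hprox a (hprox b).1
  have k2 := prox_growth hK hG hc prox hprox b (hprox a).1
  have hid := aux_inner_identity (prox a) (prox b) a b
  have hrev : ‖prox b - prox a‖ = ‖prox a - prox b‖ := norm_sub_rev _ _
  rw [hrev] at k1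
  have hsum : c * (‖prox a - a‖^2 + ‖prox b - b‖^2 + 2*‖prox a - prox b‖^2)
      ≤ c * (‖prox b - a‖^2 + ‖prox a - b‖^2) := by ring_nf; ring_nf at k1 k2; linarith
  have hdiv := le_of_mul_le_mul_left hsum hc
  have h1 : ‖prox a - prox b‖ ^ 2 ≤ ⟪prox a - prox b, a - b⟫ := by linarith
  have h2 : ⟪prox a - prox b, a - b⟫ ≤ ‖prox a - prox b‖ * ‖a - b‖ := real_inner_le_norm _ _
  rcases eq_or_lt_of_le (norm_nonneg (prox a - prox b)) with h | h
  · rw [← h]; exact norm_nonneg _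
  · have h3 := h1.trans h2
    rw [pow_two] at h3
    exact le_of_mul_le_mul_left h3 h

end Aux

/-- one-step perturbation bound for the prox step with inexact
(consensus-subroutine) averaging: ‖prox(Mv) − prox(v̂)‖ ≤ (1 + λ)β + λγ‖w‖. -/
theorem stmt8 (d m : ℕ) (hm : 0 < m)
    (Q : Set (EuclideanSpace ℝ (Fin d)))
    (hQne : Q.Nonempty) (hQclosed : IsClosed Q) (hQconvex : Convex ℝ Q)
    (g : EuclideanSpace ℝ (Fin d) → ℝ)
    (hgcont : Continuous g) (hgconv : ConvexOn ℝ Set.univ g)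
    (γ : ℝ) (hγ : 0 < γ)
    (prox : Vec m d → Vec m d)
    (hprox : ∀ s : Vec m d,
      (∀ i, prox s i ∈ Q) ∧ ∀ q : Vec m d, (∀ i, q i ∈ Q) → q ≠ prox s →
        (∑ i, g (prox s i)) + 1 / (2 * γ) * ‖prox s - s‖ ^ 2
          < (∑ i, g (q i)) + 1 / (2 * γ) * ‖q - s‖ ^ 2)
    (P M : Vec m d →L[ℝ] Vec m d)
    (hP : ∀ (v : Vec m d) (i : Fin m), P v i = (m : ℝ)⁻¹ • ∑ j, v j)
    (hMP : ∀ v, M (P v) = P v) (hPM : ∀ v, P (M v) = P v)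
    (lam : ℝ) (hlam : 0 ≤ lam) (hMnorm : ‖M - P‖ ≤ lam)
    (μ : ℝ) (hμ : 0 ≤ μ) (hμγ0 : 0 ≤ μ * γ) (hμγ1 : μ * γ ≤ 1)
    (β : ℝ) (hβ : 0 ≤ β)
    (y u yh uh w : Vec m d)
    (hyh : P yh = yh) (huh : P uh = uh)
    (hyβ : ‖y - yh‖ ≤ β) (huβ : ‖u - uh‖ ≤ β)
    (v vh : Vec m d)
    (hv : v = (μ * γ) • y + (1 - μ * γ) • u - γ • w)
    (hvh : vh = (μ * γ) • yh + (1 - μ * γ) • uh - γ • P w) :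
    ‖prox (M v) - prox vh‖ ≤ (1 + lam) * β + lam * γ * ‖w‖ := by
  -- the constraint set and objective
  set K : Set (Vec m d) := {x | ∀ i, x i ∈ Q} with hK
  have hKconv : Convex ℝ K := by
    intro x hx y hy a b ha hb hab i
    simpa using hQconvex (hx i) (hy i) ha hb hab
  have hGconv : ConvexOn ℝ K (fun x : Vec m d => ∑ i, g (x i)) := by
    refine ⟨hKconv, fun x _ y _ a b ha hb hab => ?_⟩
    simp only [PiLp.add_apply, PiLp.smul_apply, smul_eq_mul]
    calc ∑ i, g (a • x i + b • y i)
        ≤ ∑ i, (a * g (x i) + b * g (y i)) :=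
          Finset.sum_le_sum fun i _ => hgconv.2 (Set.mem_univ _) (Set.mem_univ _) ha hb hab
      _ = a * ∑ i, g (x i) + b * ∑ i, g (y i) := by
          rw [Finset.sum_add_distrib, Finset.mul_sum, Finset.mul_sum]
  have nonexp : ∀ a b : Vec m d, ‖prox a - prox b‖ ≤ ‖a - b‖ :=
    prox_nonexpansive hKconv hGconv (c := 1 / (2 * γ)) (by positivity) prox
      (fun s => ⟨(hprox s).1, fun q hq hne => (hprox s).2 q hq hne⟩)
  -- projection facts
  have hPidem : ∀ x : Vec m d, P (P x) = P x := by
    intro x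
    refine PiLp.ext fun i => ?_
    rw [hP, hP]
    rw [show (∑ j, P x j) = ∑ _j : Fin m, ((m:ℝ)⁻¹ • ∑ k, x k) from
      Finset.sum_congr rfl fun j _ => hP x j]
    rw [Finset.sum_const, Finset.card_univ, Fintype.card_fin,
      ← Nat.cast_smul_eq_nsmul ℝ, smul_smul, smul_smul]
    congr 1
    field_simp
  have hPsym : ∀ x z : Vec m d, ⟪P x, z⟫ = ⟪x, P z⟫ := by
    intro x z
    calc ⟪P x, z⟫ = ∑ i, ⟪(m:ℝ)⁻¹ • ∑ j, x j, z i⟫ := by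
          rw [PiLp.inner_apply]; exact Finset.sum_congr rfl fun i _ => by rw [hP]
      _ = (m:ℝ)⁻¹ * ∑ i, ∑ j, ⟪x j, z i⟫ := by
          rw [Finset.mul_sum]
          exact Finset.sum_congr rfl fun i _ => by rw [real_inner_smul_left, sum_inner]
      _ = (m:ℝ)⁻¹ * ∑ j, ∑ i, ⟪x j, z i⟫ := by rw [Finset.sum_comm]
      _ = ∑ j, ⟪x j, (m:ℝ)⁻¹ • ∑ i, z i⟫ := by
          rw [Finset.mul_sum]
          exact Finset.sum_congr rfl fun j _ => by rw [real_inner_smul_right, inner_sum]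
      _ = ⟪x, P z⟫ := by
          rw [PiLp.inner_apply]; exact Finset.sum_congr rfl fun j _ => by rw [hP]
  have hPnorm : ∀ x : Vec m d, ‖P x‖ ≤ ‖x‖ := by
    intro x
    have h1 : ‖P x‖ ^ 2 = ⟪x, P x⟫ := by
      rw [← real_inner_self_eq_norm_sq, hPsym x (P x), hPidem]
    have h2 : ⟪x, P x⟫ ≤ ‖x‖ * ‖P x‖ := real_inner_le_norm _ _
    rcases eq_or_lt_of_le (norm_nonneg (P x)) with h | h
    · rw [← h]; exact norm_nonneg _
    · have h3 : ‖P x‖ * ‖P x‖ ≤ ‖x‖ * ‖P x‖ := by rw [← pow_two]; linarith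
      exact le_of_mul_le_mul_right h3 h
  have hMPz : ∀ z : Vec m d, (M - P) (P z) = 0 := by
    intro z
    simp [ContinuousLinearMap.sub_apply, hMP, hPidem]
  have hopn : ∀ x : Vec m d, ‖(M - P) x‖ ≤ lam * ‖x‖ := fun x =>
    ((M - P).le_opNorm x).trans (mul_le_mul_of_nonneg_right hMnorm (norm_nonneg x))
  -- decomposition
  have e1 : M v - vh = (M - P) v + (P v - vh) := by
    simp only [ContinuousLinearMap.sub_apply]
    abel
  have hyh0 : (M - P) yh = 0 := by rw [← hyh]; exact hMPz yh
  have huh0 : (M - P) uh = 0 := by rw [← huh]; exact hMPz uh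
  have e2 : (M - P) v = (μ*γ) • (M - P) (y - yh) + (1 - μ*γ) • (M - P) (u - uh)
      - γ • (M - P) w := by
    have : v = ((μ*γ) • (y - yh) + (1 - μ*γ) • (u - uh) - γ • w)
        + ((μ*γ) • yh + (1 - μ*γ) • uh) := by rw [hv]; module
    rw [this]
    simp [map_add, map_sub, map_smul, hyh0, huh0]
  have e3 : P v - vh = (μ*γ) • P (y - yh) + (1 - μ*γ) • P (u - uh) := by
    rw [hv, hvh]
    simp only [map_add, map_sub, map_smul, hyh, huh]
    module
  -- norm bounds
  have n1 : ‖(M - P) (y - yh)‖ ≤ lam * β :=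
    (hopn _).trans (mul_le_mul_of_nonneg_left hyβ hlam)
  have n2 : ‖(M - P) (u - uh)‖ ≤ lam * β :=
    (hopn _).trans (mul_le_mul_of_nonneg_left huβ hlam)
  have n3 : ‖(M - P) w‖ ≤ lam * ‖w‖ := hopn w
  have n4 : ‖P (y - yh)‖ ≤ β := (hPnorm _).trans hyβ
  have n5 : ‖P (u - uh)‖ ≤ β := (hPnorm _).trans huβ
  have habs1 : |μ*γ| = μ*γ := abs_of_nonneg hμγ0
  have habs2 : |1 - μ*γ| = 1 - μ*γ := abs_of_nonneg (by linarith)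
  have habs3 : |γ| = γ := abs_of_nonneg hγ.le
  have bound : ‖M v - vh‖ ≤ ((μ*γ) * (lam*β) + (1 - μ*γ) * (lam*β) + γ * (lam*‖w‖))
      + ((μ*γ) * β + (1 - μ*γ) * β) := by
    rw [e1]
    refine (norm_add_le _ _).trans (add_le_add ?_ ?_)
    · rw [e2]
      refine (norm_sub_le _ _).trans ?_
      refine add_le_add ((norm_add_le _ _).trans (add_le_add ?_ ?_)) ?_ <;>
        rw [norm_smul, Real.norm_eq_abs]
      · rw [habs1]; exact mul_le_mul_of_nonneg_left n1 hμγ0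
      · rw [habs2]; exact mul_le_mul_of_nonneg_left n2 (by linarith)
      · rw [habs3]; exact mul_le_mul_of_nonneg_left n3 hγ.le
    · rw [e3]
      refine (norm_add_le _ _).trans (add_le_add ?_ ?_) <;> rw [norm_smul, Real.norm_eq_abs]
      · rw [habs1]; exact mul_le_mul_of_nonneg_left n4 hμγ0
      · rw [habs2]; exact mul_le_mul_of_nonneg_left n5 (by linarith)
  calc ‖prox (M v) - prox vh‖ ≤ ‖M v - vh‖ := nonexp _ _
    _ ≤ _ := bound
    _ = (1 + lam) * β + lam * γ * ‖w‖ := by ring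
end

section
/- Consider the decentralized accelerated proximal method: let F : ℝ^{md} → ℝ be differentiable, P the orthogonal projection onto the consensus subspace, prox_γ the proximal operator of G(y) = Σ_i g(y_i) over Q^m (Q nonempty closed convex, g continuous convex), μ ≥ 0, and step coefficients α_{k+1}, A_k ≥ 0 with A_{k+1} = A_k + α_{k+1} > 0 and γ_k ≥ 0 with μγ_k ≤ 1. The iterates satisfy y^{k+1} = (α_{k+1} u^k + A_k x^k)/A_{k+1}, v^{k+1} = μγ_k y^{k+1} + (1 − μγ_k)u^k − γ_k ∇F(y^{k+1}), u^{k+1} = prox_{γ_k}(M_k v^{k+1}), x^{k+1} = (α_{k+1} u^{k+1} + A_k x^k)/A_{k+1}, where M_k is a linear map with M_k P = P M_k = P and ‖M_k − P‖ ≤ λ, λ ≥ 0. The exact iterates satisfy ŷ^{k+1} = (α_{k+1} û^k + A_k x̂^k)/A_{k+1}, û^{k+1} = prox_{γ_k}( μγ_k ŷ^{k+1} + (1 − μγ_k) û^k − γ_k P∇F(y^{k+1}) ), x̂^{k+1} = (α_{k+1} û^{k+1} + A_k x̂^k)/A_{k+1}, and ŷ^{k+1} = Pŷ^{k+1}, û^k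 = Pû^k. Define β_k = max{‖y^k − ŷ^k‖, ‖u^k − û^k‖, ‖x^k − x̂^k‖}. Then β_{k+1} ≤ (1 + λ)β_k + λγ_k‖∇F(y^{k+1})‖. -/
open scoped RealInnerProductSpace BigOperators

lemma aux_Pidem {d m : ℕ} (hm : 0 < m) (P : Vec m d →L[ℝ] Vec m d)
    (hP : ∀ (v : Vec m d) (i : Fin m), P v i = (m : ℝ)⁻¹ • ∑ j, v j) (v : Vec m d) :
    P (P v) = P v := by
  have hmne : (m:ℝ) ≠ 0 := Nat.cast_ne_zero.mpr hm.ne'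
  refine PiLp.ext fun i => ?_
  rw [hP, hP]
  congr 1
  have : ∀ j : Fin m, P v j = (m : ℝ)⁻¹ • ∑ l, v l := fun j => hP v j
  simp only [this, Finset.sum_const, Finset.card_univ, Fintype.card_fin]
  rw [← Nat.cast_smul_eq_nsmul ℝ, smul_smul]
  field_simp
  exact one_smul _ _

lemma aux_Porth {d m : ℕ} (hm : 0 < m) (P : Vec m d →L[ℝ] Vec m d)
    (hP : ∀ (v : Vec m d) (i : Fin m), P v i = (m : ℝ)⁻¹ • ∑ j, v j) (v : Vec m d) :
    ⟪P v, v - P v⟫ = 0 := by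
  have hmne : (m:ℝ) ≠ 0 := Nat.cast_ne_zero.mpr hm.ne'
  rw [PiLp.inner_apply]
  have h : ∀ i : Fin m, ⟪P v i, (v - P v) i⟫
      = ⟪(m : ℝ)⁻¹ • ∑ j, v j, v i⟫ - ⟪(m : ℝ)⁻¹ • ∑ j, v j, (m : ℝ)⁻¹ • ∑ j, v j⟫ := by
    intro i
    have : (v - P v) i = v i - P v i := rfl
    rw [this, inner_sub_right, hP]
  simp only [h]
  rw [Finset.sum_sub_distrib, ← inner_sum, Finset.sum_const, Finset.card_univ, Fintype.card_fin]
  rw [real_inner_smul_left, real_inner_smul_left, real_inner_smul_right]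
  field_simp
  ring_nf; rw [mul_assoc, ← mul_pow, mul_inv_cancel₀ hmne, one_pow, mul_one, sub_self]

lemma aux_Ple {d m : ℕ} (hm : 0 < m) (P : Vec m d →L[ℝ] Vec m d)
    (hP : ∀ (v : Vec m d) (i : Fin m), P v i = (m : ℝ)⁻¹ • ∑ j, v j) (v : Vec m d) :
    ‖P v‖ ≤ ‖v‖ ∧ ‖v - P v‖ ≤ ‖v‖ := by
  have h := aux_Porth hm P hP v
  have hv : v = P v + (v - P v) := by abel
  have hsq : ‖v‖^2 = ‖P v‖^2 + ‖v - P v‖^2 := by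
    conv_lhs => rw [hv]
    rw [norm_add_sq_real, h]; ring
  constructor <;>
    nlinarith [norm_nonneg (P v), norm_nonneg (v - P v), norm_nonneg v]

lemma aux_prox_vi {d m : ℕ} (Q : Set (EuclideanSpace ℝ (Fin d)))
    (hQconvex : Convex ℝ Q)
    (g : EuclideanSpace ℝ (Fin d) → ℝ) (hgconv : ConvexOn ℝ Set.univ g)
    (γ : ℝ) (hγ : 0 < γ) (p s : Vec m d)
    (hp : ∀ i, p i ∈ Q)
    (hmin : ∀ q : Vec m d, (∀ i, q i ∈ Q) →
      (∑ i, g (p i)) + 1 / (2 * γ) * ‖p - s‖ ^ 2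
        ≤ (∑ i, g (q i)) + 1 / (2 * γ) * ‖q - s‖ ^ 2)
    (q : Vec m d) (hq : ∀ i, q i ∈ Q) :
    0 ≤ ((∑ i, g (q i)) - (∑ i, g (p i))) + (1/γ) * ⟪p - s, q - p⟫ := by
  set Gp := ∑ i, g (p i) with hGp
  set Gq := ∑ i, g (q i) with hGq
  set I := ⟪p - s, q - p⟫ with hI
  set N := ‖q - p‖ ^ 2 with hN
  have hN0 : 0 ≤ N := sq_nonneg _
  have key : ∀ t : ℝ, 0 < t → t ≤ 1 →
      0 ≤ 2*γ*t*(Gq - Gp) + 2*t*I + t^2*N := by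
    intro t ht ht1
    have happ : ∀ i, (p + t • (q - p)) i = (1 - t) • p i + t • q i := by
      intro i
      show p i + t • (q i - p i) = (1 - t) • p i + t • q i
      module
    have hz : ∀ i, (p + t • (q - p)) i ∈ Q := by
      intro i
      rw [happ i]
      exact hQconvex (hp i) (hq i) (by linarith) ht.le (by ring)
    have h1 := hmin _ hz
    have hg : (∑ i, g ((p + t • (q - p)) i)) ≤ (1 - t) * Gp + t * Gq := by
      have hb : ∀ i ∈ Finset.univ, g ((p + t • (q - p)) i)
          ≤ (1-t) * g (p i) + t * g (q i) := by
        intro i _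
        rw [happ i]
        have := hgconv.2 (Set.mem_univ (p i)) (Set.mem_univ (q i))
          (by linarith : (0:ℝ) ≤ 1 - t) ht.le (by ring)
        simpa [smul_eq_mul] using this
      calc (∑ i, g ((p + t • (q - p)) i)) ≤ ∑ i, ((1-t) * g (p i) + t * g (q i)) :=
            Finset.sum_le_sum hb
        _ = (1 - t) * Gp + t * Gq := by
            rw [Finset.sum_add_distrib, ← Finset.mul_sum, ← Finset.mul_sum]
    have hnorm : ‖p + t • (q - p) - s‖ ^ 2 = ‖p - s‖^2 + 2 * (t * I) + t^2 * N := by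
      have he : p + t • (q - p) - s = (p - s) + t • (q - p) := by module
      rw [he, norm_add_sq_real, real_inner_smul_right, norm_smul, Real.norm_eq_abs,
        abs_of_pos ht, hI, hN]
      ring
    rw [hnorm] at h1
    have hc : (0:ℝ) < 1 / (2*γ) := by positivity
    have h2 : Gp ≤ (1 - t) * Gp + t * Gq + 1/(2*γ) * (2 * (t * I) + t^2 * N) := by
      nlinarith [h1, hg]
    have h3 : 0 ≤ t * (Gq - Gp) + 1/(2*γ) * (2 * (t * I) + t^2 * N) := by nlinarith
    have h5 : 0 ≤ (2*γ) * (t * (Gq - Gp) + 1/(2*γ) * (2 * (t * I) + t^2 * N)) :=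
      mul_nonneg (by linarith) h3
    have h6 : (2*γ) * (t * (Gq - Gp) + 1/(2*γ) * (2 * (t * I) + t^2 * N))
        = 2*γ*t*(Gq - Gp) + 2*t*I + t^2*N := by
      field_simp; ring
    linarith [h5, h6.symm.le, h6.le]
  by_contra hcon
  push_neg at hcon
  set c := (Gq - Gp) + (1/γ) * I with hc
  have hcneg : c < 0 := hcon
  have htq : 0 < -γ*c/(N+1) := by
    apply div_pos
    · nlinarith
    · linarith
  set t := min 1 (-γ*c/(N+1)) with htdef
  have htpos : 0 < t := lt_min one_pos htq
  have ht1 : t ≤ 1 := min_le_left _ _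
  have hkey := key t htpos ht1
  have he1 : 2*γ*t*(Gq - Gp) + 2*t*I = 2*γ*t*c := by
    rw [hc]; field_simp
  have ht2 : t ≤ -γ*c/(N+1) := min_le_right _ _
  have htN : t * N ≤ -γ*c := by
    calc t * N ≤ (-γ*c/(N+1)) * N := mul_le_mul_of_nonneg_right ht2 hN0
      _ ≤ -γ*c := by
        rw [div_mul_eq_mul_div, div_le_iff₀ (by linarith)]
        nlinarith
  nlinarith [mul_le_mul_of_nonneg_left htN htpos.le,
    mul_neg_of_pos_of_neg (mul_pos hγ htpos) hcneg]

lemma aux_prox_lip {d m : ℕ} (Q : Set (EuclideanSpace ℝ (Fin d)))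
    (hQconvex : Convex ℝ Q)
    (g : EuclideanSpace ℝ (Fin d) → ℝ) (hgconv : ConvexOn ℝ Set.univ g)
    (γ : ℝ) (hγ : 0 < γ) (p1 s1 p2 s2 : Vec m d)
    (hp1 : ∀ i, p1 i ∈ Q) (hp2 : ∀ i, p2 i ∈ Q)
    (hmin1 : ∀ q : Vec m d, (∀ i, q i ∈ Q) →
      (∑ i, g (p1 i)) + 1 / (2 * γ) * ‖p1 - s1‖ ^ 2
        ≤ (∑ i, g (q i)) + 1 / (2 * γ) * ‖q - s1‖ ^ 2)
    (hmin2 : ∀ q : Vec m d, (∀ i, q i ∈ Q) →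
      (∑ i, g (p2 i)) + 1 / (2 * γ) * ‖p2 - s2‖ ^ 2
        ≤ (∑ i, g (q i)) + 1 / (2 * γ) * ‖q - s2‖ ^ 2) :
    ‖p1 - p2‖ ≤ ‖s1 - s2‖ := by
  have h1 := aux_prox_vi Q hQconvex g hgconv γ hγ p1 s1 hp1 hmin1 p2 hp2
  have h2 := aux_prox_vi Q hQconvex g hgconv γ hγ p2 s2 hp2 hmin2 p1 hp1
  have hexp : ⟪p1 - s1, p2 - p1⟫ + ⟪p2 - s2, p1 - p2⟫
      = -(‖p1 - p2‖^2) + ⟪s1 - s2, p1 - p2⟫ := by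
    rw [show ‖p1 - p2‖^2 = ⟪p1 - p2, p1 - p2⟫ from (real_inner_self_eq_norm_sq _).symm]
    simp only [inner_sub_left, inner_sub_right]
    linarith [real_inner_comm p2 p1]
  have hγ' : (0:ℝ) < 1/γ := by positivity
  have hsum : 0 ≤ (1/γ) * (⟪p1 - s1, p2 - p1⟫ + ⟪p2 - s2, p1 - p2⟫) := by
    nlinarith [h1, h2]
  have hpos : 0 ≤ ⟪p1 - s1, p2 - p1⟫ + ⟪p2 - s2, p1 - p2⟫ := by
    nlinarith [hsum, hγ']
  have hCS := real_inner_le_norm (s1 - s2) (p1 - p2)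
  nlinarith [norm_nonneg (p1 - p2), norm_nonneg (s1 - s2), hCS, hexp, hpos]


set_option maxHeartbeats 2000000 in
/-- Lemma 2 of the paper: for the decentralized accelerated
proximal method with inexact consensus, the distance
β_k = max{‖y^k − ŷ^k‖, ‖u^k − û^k‖, ‖x^k − x̂^k‖} between the inexact and the
exact trajectories satisfies β_{k+1} ≤ (1 + λ)β_k + λγ_k‖∇F(y^{k+1})‖. -/
theorem stmt9 (d m : ℕ) (hm : 0 < m)
    (Q : Set (EuclideanSpace ℝ (Fin d)))
    (hQne : Q.Nonempty) (hQclosed : IsClosed Q) (hQconvex : Convex ℝ Q)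
    (g : EuclideanSpace ℝ (Fin d) → ℝ)
    (hgcont : Continuous g) (hgconv : ConvexOn ℝ Set.univ g)
    (prox : ℝ → Vec m d → Vec m d)
    (hprox : ∀ γ' : ℝ, 0 < γ' → ∀ s : Vec m d,
      (∀ i, prox γ' s i ∈ Q) ∧ ∀ q : Vec m d, (∀ i, q i ∈ Q) → q ≠ prox γ' s →
        (∑ i, g (prox γ' s i)) + 1 / (2 * γ') * ‖prox γ' s - s‖ ^ 2
          < (∑ i, g (q i)) + 1 / (2 * γ') * ‖q - s‖ ^ 2)
    (F : Vec m d → ℝ) (hF : Differentiable ℝ F)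
    (P : Vec m d →L[ℝ] Vec m d)
    (hP : ∀ (v : Vec m d) (i : Fin m), P v i = (m : ℝ)⁻¹ • ∑ j, v j)
    (M : ℕ → Vec m d →L[ℝ] Vec m d)
    (hMP : ∀ k v, M k (P v) = P v) (hPM : ∀ k v, P (M k v) = P v)
    (lam : ℝ) (hlam : 0 ≤ lam) (hMnorm : ∀ k, ‖M k - P‖ ≤ lam)
    (μ : ℝ) (hμ : 0 ≤ μ)
    (α A γ : ℕ → ℝ)
    (hα : ∀ k, 0 ≤ α (k + 1)) (hA0 : ∀ k, 0 ≤ A k)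
    (hA : ∀ k, A (k + 1) = A k + α (k + 1)) (hApos : ∀ k, 0 < A (k + 1))
    (hγ : ∀ k, 0 < γ k) (hμγ : ∀ k, μ * γ k ≤ 1)
    (y u x v yh uh xh : ℕ → Vec m d)
    (hy : ∀ k, y (k + 1) = (A (k + 1))⁻¹ • (α (k + 1) • u k + A k • x k))
    (hv : ∀ k, v (k + 1) = (μ * γ k) • y (k + 1) + (1 - μ * γ k) • u k
      - γ k • gradient F (y (k + 1)))
    (hu : ∀ k, u (k + 1) = prox (γ k) (M k (v (k + 1))))
    (hx : ∀ k, x (k + 1) = (A (k + 1))⁻¹ • (α (k + 1) • u (k + 1) + A k • x k))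
    (hyh : ∀ k, yh (k + 1) = (A (k + 1))⁻¹ • (α (k + 1) • uh k + A k • xh k))
    (huh : ∀ k, uh (k + 1) = prox (γ k) ((μ * γ k) • yh (k + 1)
      + (1 - μ * γ k) • uh k - γ k • P (gradient F (y (k + 1)))))
    (hxh : ∀ k, xh (k + 1) = (A (k + 1))⁻¹ • (α (k + 1) • uh (k + 1) + A k • xh k))
    (hyhP : ∀ k, P (yh (k + 1)) = yh (k + 1)) (huhP : ∀ k, P (uh k) = uh k)
    (β : ℕ → ℝ)
    (hβ : ∀ k, β k = max (max ‖y k - yh k‖ ‖u k - uh k‖) ‖x k - xh k‖) :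
    ∀ k, β (k + 1) ≤ (1 + lam) * β k + lam * γ k * ‖gradient F (y (k + 1))‖ := by
  intro k
  have hγk := hγ k
  have hμγk := hμγ k
  have hμγ0 : 0 ≤ μ * γ k := mul_nonneg hμ hγk.le
  set G := gradient F (y (k+1)) with hG
  have hβy : ‖y k - yh k‖ ≤ β k := by
    rw [hβ]; exact le_trans (le_max_left _ _) (le_max_left _ _)
  have hβu : ‖u k - uh k‖ ≤ β k := by
    rw [hβ]; exact le_trans (le_max_right _ _) (le_max_left _ _)
  have hβx : ‖x k - xh k‖ ≤ β k := by rw [hβ]; exact le_max_right _ _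
  have hβ0 : 0 ≤ β k := le_trans (norm_nonneg _) hβy
  have hApos' := hApos k
  have hAk := hA0 k
  have hαk := hα k
  have hAk1 : A (k+1) = A k + α (k+1) := hA k
  have hAne : A (k+1) ≠ 0 := hApos'.ne'
  -- helper for convex-type combinations
  have combo : ∀ (a b : ℝ) (p q : Vec m d) (r : ℝ), 0 ≤ a → 0 ≤ b →
      ‖p‖ ≤ r → ‖q‖ ≤ r → ‖a • p + b • q‖ ≤ (a + b) * r := by
    intro a b p q r ha hb hp hq
    calc ‖a • p + b • q‖ ≤ ‖a • p‖ + ‖b • q‖ := norm_add_le _ _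
      _ = a * ‖p‖ + b * ‖q‖ := by
          rw [norm_smul, norm_smul, Real.norm_eq_abs, Real.norm_eq_abs,
            abs_of_nonneg ha, abs_of_nonneg hb]
      _ ≤ (a + b) * r := by nlinarith [norm_nonneg p, norm_nonneg q]
  -- step 1 : y bound
  have hydiff : y (k+1) - yh (k+1)
      = (A (k+1))⁻¹ • (α (k+1) • (u k - uh k) + A k • (x k - xh k)) := by
    rw [hy, hyh]; module
  have step1 : ‖y (k+1) - yh (k+1)‖ ≤ β k := by
    rw [hydiff, norm_smul, Real.norm_eq_abs, abs_of_nonneg (inv_nonneg.mpr hApos'.le)]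
    have h := combo (α (k+1)) (A k) (u k - uh k) (x k - xh k) (β k) hαk hAk hβu hβx
    calc (A (k+1))⁻¹ * ‖α (k+1) • (u k - uh k) + A k • (x k - xh k)‖
        ≤ (A (k+1))⁻¹ * ((α (k+1) + A k) * β k) :=
          mul_le_mul_of_nonneg_left h (inv_nonneg.mpr hApos'.le)
      _ = β k := by
          rw [add_comm (α (k+1)) (A k), ← hAk1, inv_mul_cancel_left₀ hAne]
  -- P facts
  have hPP : ∀ w : Vec m d, P (P w) = P w := aux_Pidem hm P hP
  have hPle : ∀ w : Vec m d, ‖P w‖ ≤ ‖w‖ := fun w => (aux_Ple hm P hP w).1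
  have hIPle : ∀ w : Vec m d, ‖w - P w‖ ≤ ‖w‖ := fun w => (aux_Ple hm P hP w).2
  -- prox nonexpansiveness
  have hminof : ∀ s : Vec m d, ∀ q : Vec m d, (∀ i, q i ∈ Q) →
      (∑ i, g (prox (γ k) s i)) + 1 / (2 * γ k) * ‖prox (γ k) s - s‖ ^ 2
        ≤ (∑ i, g (q i)) + 1 / (2 * γ k) * ‖q - s‖ ^ 2 := by
    intro s q hq
    by_cases hqe : q = prox (γ k) s
    · rw [hqe]
    · exact ((hprox _ hγk s).2 q hq hqe).le
  have hlip : ∀ s t : Vec m d, ‖prox (γ k) s - prox (γ k) t‖ ≤ ‖s - t‖ := by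
    intro s t
    exact aux_prox_lip Q hQconvex g hgconv (γ k) hγk _ s _ t
      (hprox _ hγk s).1 (hprox _ hγk t).1 (hminof s) (hminof t)
  -- step 2 : u bound
  set vh := (μ * γ k) • yh (k+1) + (1 - μ * γ k) • uh k - γ k • P G with hvh
  have hud : ‖u (k+1) - uh (k+1)‖ ≤ ‖M k (v (k+1)) - vh‖ := by
    rw [hu, huh]; exact hlip _ _
  have hMPv : (M k - P) (v (k+1) - P (v (k+1))) = M k (v (k+1)) - P (v (k+1)) := by
    simp only [ContinuousLinearMap.sub_apply, map_sub, hMP, hPP]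
    abel
  have hw : v (k+1) - P (v (k+1))
      = (μ * γ k) • ((y (k+1) - yh (k+1)) - P (y (k+1) - yh (k+1)))
        + (1 - μ * γ k) • ((u k - uh k) - P (u k - uh k)) - γ k • (G - P G) := by
    simp only [hv k, map_add, map_sub, map_smul, hyhP k, huhP k, ← hG]
    module
  have hwnorm : ‖v (k+1) - P (v (k+1))‖ ≤ β k + γ k * ‖G‖ := by
    rw [hw]
    have t1 : ‖(μ * γ k) • ((y (k+1) - yh (k+1)) - P (y (k+1) - yh (k+1)))
        + (1 - μ * γ k) • ((u k - uh k) - P (u k - uh k))‖ ≤ (μ * γ k + (1 - μ * γ k)) * β k :=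
      combo _ _ _ _ _ hμγ0 (by linarith) ((hIPle _).trans step1) ((hIPle _).trans hβu)
    have t2 : ‖γ k • (G - P G)‖ ≤ γ k * ‖G‖ := by
      rw [norm_smul, Real.norm_eq_abs, abs_of_pos hγk]
      exact mul_le_mul_of_nonneg_left (hIPle G) hγk.le
    calc ‖_ + _ - γ k • (G - P G)‖ ≤ ‖_ + _‖ + ‖γ k • (G - P G)‖ := norm_sub_le _ _
      _ ≤ β k + γ k * ‖G‖ := by
          have := t1; simp only [show μ * γ k + (1 - μ * γ k) = 1 by ring, one_mul] at this
          linarith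
  have hMPnorm : ‖M k (v (k+1)) - P (v (k+1))‖ ≤ lam * (β k + γ k * ‖G‖) := by
    rw [← hMPv]
    calc ‖(M k - P) (v (k+1) - P (v (k+1)))‖
        ≤ ‖M k - P‖ * ‖v (k+1) - P (v (k+1))‖ := (M k - P).le_opNorm _
      _ ≤ lam * (β k + γ k * ‖G‖) := by
          apply mul_le_mul (hMnorm k) hwnorm (norm_nonneg _) hlam
  have hPvh : P (v (k+1)) - vh
      = (μ * γ k) • P (y (k+1) - yh (k+1)) + (1 - μ * γ k) • P (u k - uh k) := by
    simp only [hv k, hvh, map_add, map_sub, map_smul, hyhP k, huhP k, ← hG]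
    module
  have hPvhnorm : ‖P (v (k+1)) - vh‖ ≤ β k := by
    rw [hPvh]
    have := combo (μ * γ k) (1 - μ * γ k) (P (y (k+1) - yh (k+1))) (P (u k - uh k)) (β k)
      hμγ0 (by linarith) ((hPle _).trans step1) ((hPle _).trans hβu)
    simpa [show μ * γ k + (1 - μ * γ k) = 1 by ring] using this
  have step2 : ‖u (k+1) - uh (k+1)‖ ≤ (1 + lam) * β k + lam * γ k * ‖G‖ := by
    have htri : ‖M k (v (k+1)) - vh‖
        ≤ ‖M k (v (k+1)) - P (v (k+1))‖ + ‖P (v (k+1)) - vh‖ :=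
      norm_sub_le_norm_sub_add_norm_sub _ _ _
    calc ‖u (k+1) - uh (k+1)‖ ≤ ‖M k (v (k+1)) - vh‖ := hud
      _ ≤ ‖M k (v (k+1)) - P (v (k+1))‖ + ‖P (v (k+1)) - vh‖ := htri
      _ ≤ lam * (β k + γ k * ‖G‖) + β k := add_le_add hMPnorm hPvhnorm
      _ = (1 + lam) * β k + lam * γ k * ‖G‖ := by ring
  -- step 3 : x bound
  have hRβ : β k ≤ (1 + lam) * β k + lam * γ k * ‖G‖ := by
    nlinarith [mul_nonneg hlam hβ0, mul_nonneg (mul_nonneg hlam hγk.le) (norm_nonneg G)]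
  have hxdiff : x (k+1) - xh (k+1)
      = (A (k+1))⁻¹ • (α (k+1) • (u (k+1) - uh (k+1)) + A k • (x k - xh k)) := by
    rw [hx, hxh]; module
  have step3 : ‖x (k+1) - xh (k+1)‖ ≤ (1 + lam) * β k + lam * γ k * ‖G‖ := by
    rw [hxdiff, norm_smul, Real.norm_eq_abs, abs_of_nonneg (inv_nonneg.mpr hApos'.le)]
    have h := combo (α (k+1)) (A k) (u (k+1) - uh (k+1)) (x k - xh k)
      ((1 + lam) * β k + lam * γ k * ‖G‖) hαk hAk step2 (hβx.trans hRβ)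
    calc (A (k+1))⁻¹ * ‖α (k+1) • (u (k+1) - uh (k+1)) + A k • (x k - xh k)‖
        ≤ (A (k+1))⁻¹ * ((α (k+1) + A k) * ((1 + lam) * β k + lam * γ k * ‖G‖)) :=
          mul_le_mul_of_nonneg_left h (inv_nonneg.mpr hApos'.le)
      _ = (1 + lam) * β k + lam * γ k * ‖G‖ := by
          rw [add_comm (α (k+1)) (A k), ← hAk1, inv_mul_cancel_left₀ hAne]
  rw [hβ (k+1)]
  exact max_le (max_le (step1.trans hRβ) step2) step3
end

section
/- Let 0 < μ ≤ L and define the sequences A^0 = 0 and, for k ≥ 0, α^{k+1} equal to the greater root of the quadratic equation (A^k + α)(1 + A^k μ/2) = 2L α² in α, and A^{k+1} = A^k + α^{k+1}. Then for every N ≥ 1, A^N ≥ (1/(2L)) · (1 + (1/4)√(μ/L))^{2(N−1)}. -/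
open scoped BigOperators

set_option maxHeartbeats 1000000 in
/-- first part of Lemma 3: growth of the coefficients A^N. -/
theorem stmt10 (μ L : ℝ) (hμ : 0 < μ) (hμL : μ ≤ L)
    (A α : ℕ → ℝ) (hA0 : A 0 = 0)
    (hA : ∀ k, A (k + 1) = A k + α (k + 1))
    (hroot : ∀ k, (A k + α (k + 1)) * (1 + A k * μ / 2) = 2 * L * (α (k + 1)) ^ 2)
    (hgreater : ∀ k (b : ℝ),
      (A k + b) * (1 + A k * μ / 2) = 2 * L * b ^ 2 → b ≤ α (k + 1)) :
    ∀ N : ℕ, 1 ≤ N →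
      A N ≥ (1 / (2 * L)) * (1 + (1 / 4) * Real.sqrt (μ / L)) ^ (2 * (N - 1)) := by
  have hL : 0 < L := lt_of_lt_of_le hμ hμL
  set s := Real.sqrt (μ / L) with hs
  have hs0 : 0 ≤ s := Real.sqrt_nonneg _
  have hs2 : s ^ 2 = μ / L := Real.sq_sqrt (by positivity)
  have hsL : s ^ 2 * L = μ := by rw [hs2]; field_simp
  -- base case
  have hA1 : A 1 ≥ 1 / (2 * L) := by
    have h := hgreater 0 (1 / (2 * L)) (by rw [hA0]; field_simp; ring)
    have h2 := hA 0
    rw [hA0] at h2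
    linarith
  have key : ∀ n : ℕ, A (n + 1) ≥ 1 / (2 * L) * (1 + (1 / 4) * s) ^ (2 * n) := by
    intro n
    induction n with
    | zero => simpa using hA1
    | succ n ih =>
      set a := A (n + 1) with ha_def
      have ha : 0 < a := lt_of_lt_of_le (by positivity) ih
      set p := 1 + a * μ / 2 with hp
      have hp0 : 0 < p := by positivity
      have hD : 0 ≤ p ^ 2 + 8 * L * a * p := by positivity
      set r := (p + Real.sqrt (p ^ 2 + 8 * L * a * p)) / (4 * L) with hr
      have hsq : Real.sqrt (p ^ 2 + 8 * L * a * p) ^ 2 = p ^ 2 + 8 * L * a * p :=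
        Real.sq_sqrt hD
      have hsqrt0 : 0 ≤ Real.sqrt (p ^ 2 + 8 * L * a * p) := Real.sqrt_nonneg _
      have h4 : 4 * L * r = p + Real.sqrt (p ^ 2 + 8 * L * a * p) := by
        rw [hr]; field_simp
      have h5 : (4 * L * r - p) ^ 2 = p ^ 2 + 8 * L * a * p := by
        rw [show 4 * L * r - p = Real.sqrt (p ^ 2 + 8 * L * a * p) from by linarith]
        exact hsq
      have hroot_r : (a + r) * p = 2 * L * r ^ 2 := by
        have h6 : 8 * L * ((a + r) * p) = 8 * L * (2 * L * r ^ 2) := by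
          linear_combination -h5
        exact mul_left_cancel₀ (by positivity : (8 * L : ℝ) ≠ 0) h6
      have hbr : r ≤ α (n + 2) := hgreater (n + 1) r (by rw [hp] at hroot_r; exact hroot_r)
      -- bound: sqrt (p^2 + 8 L a p) ≥ 2 a L s
      have h1 : 2 * a * L * s ≤ Real.sqrt (p ^ 2 + 8 * L * a * p) := by
        have hle : (2 * a * L * s) ^ 2 ≤ p ^ 2 + 8 * L * a * p := by
          have hsq2 : (2 * a * L * s) ^ 2 = 4 * a ^ 2 * L * (s ^ 2 * L) := by ring
          rw [hsq2, hsL, hp]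
          have t1 : 0 < a * μ := mul_pos ha hμ
          have t2 : 0 ≤ (a * μ) ^ 2 := sq_nonneg _
          have t3 : 0 < L * a := mul_pos hL ha
          nlinarith [t1, t2, t3]
        calc 2 * a * L * s = Real.sqrt ((2 * a * L * s) ^ 2) := by
              rw [Real.sqrt_sq (by positivity)]
          _ ≤ Real.sqrt (p ^ 2 + 8 * L * a * p) := Real.sqrt_le_sqrt hle
      -- lower bound on r
      have hr_lb : a * s / 2 + a * μ / (16 * L) ≤ r := by
        have h2 : (p + 2 * a * L * s) / (4 * L) ≤ r := by
          rw [hr]; gcongr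
        have e1 : a * μ / (16 * L) * (4 * L) = a * μ / 4 := by field_simp; ring
        have h3 : a * s / 2 + a * μ / (16 * L) ≤ (p + 2 * a * L * s) / (4 * L) := by
          rw [le_div_iff₀ (by positivity : (0:ℝ) < 4 * L), hp]
          have expand : (a * s / 2 + a * μ / (16 * L)) * (4 * L)
              = 2 * a * L * s + a * μ / (16 * L) * (4 * L) := by ring
          rw [expand, e1]
          have t1 : 0 < a * μ := mul_pos ha hμ
          linarith
        linarith
      -- A (n+2) ≥ a * (1 + s/4)^2
      have h16 : a * s ^ 2 / 16 = a * μ / (16 * L) := by rw [hs2]; field_simp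
      have hstep : a * (1 + (1 / 4) * s) ^ 2 ≤ A (n + 1 + 1) := by
        rw [hA (n + 1), ← ha_def]
        have expand2 : a * (1 + (1 / 4) * s) ^ 2 = a + a * s / 2 + a * s ^ 2 / 16 := by ring
        rw [expand2, h16]
        linarith
      have hcpos : (0:ℝ) < 1 + (1 / 4) * s := by positivity
      calc 1 / (2 * L) * (1 + (1 / 4) * s) ^ (2 * (n + 1))
          = (1 / (2 * L) * (1 + (1 / 4) * s) ^ (2 * n)) * (1 + (1 / 4) * s) ^ 2 := by
            rw [show 2 * (n + 1) = 2 * n + 2 from by omega, pow_add]; ring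
        _ ≤ a * (1 + (1 / 4) * s) ^ 2 :=
            mul_le_mul_of_nonneg_right ih (by positivity)
        _ ≤ A (n + 1 + 1) := hstep
  intro N hN
  obtain ⟨n, rfl⟩ : ∃ n, N = n + 1 := ⟨N - 1, by omega⟩
  simpa using key n
end

section
/- Let 0 < μ ≤ L and define the sequences A^0 = 0 and, for k ≥ 0, α^{k+1} equal to the greater root of the quadratic equation (A^k + α)(1 + A^k μ/2) = 2L α² in α, and A^{k+1} = A^k + α^{k+1}. Then for every N ≥ 1, ( Σ_{k=0}^{N−1} A^{k+1} ) / A^N ≤ 1 + 2√(L/μ). -/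
open scoped BigOperators

/-- second part of Lemma 3: (∑_{k=0}^{N−1} A^{k+1}) / A^N ≤ 1 + 2√(L/μ). -/
theorem stmt11 (μ L : ℝ) (hμ : 0 < μ) (hμL : μ ≤ L)
    (A α : ℕ → ℝ) (hA0 : A 0 = 0)
    (hA : ∀ k, A (k + 1) = A k + α (k + 1))
    (hroot : ∀ k, (A k + α (k + 1)) * (1 + A k * μ / 2) = 2 * L * (α (k + 1)) ^ 2)
    (hgreater : ∀ k (b : ℝ),
      (A k + b) * (1 + A k * μ / 2) = 2 * L * b ^ 2 → b ≤ α (k + 1)) :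
    ∀ N : ℕ, 1 ≤ N →
      (∑ k ∈ Finset.range N, A (k + 1)) / A N ≤ 1 + 2 * Real.sqrt (L / μ) := by
  have hL : 0 < L := lt_of_lt_of_le hμ hμL
  set c := Real.sqrt (μ / (4 * L)) with hc
  have hc2 : c ^ 2 = μ / (4 * L) := Real.sq_sqrt (by positivity)
  have hcpos : 0 < c := Real.sqrt_pos.2 (by positivity)
  -- α positivity given A k ≥ 0
  have halpha_pos : ∀ k, 0 ≤ A k → 0 < α (k + 1) := by
    intro k hAk
    set s := 1 + A k * μ / 2 with hs
    have hspos : 0 < s := by positivity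
    have hDnn : 0 ≤ s ^ 2 + 8 * L * A k * s := by positivity
    set b := (s + Real.sqrt (s ^ 2 + 8 * L * A k * s)) / (4 * L) with hb
    have hsq : Real.sqrt (s ^ 2 + 8 * L * A k * s) ^ 2 = s ^ 2 + 8 * L * A k * s :=
      Real.sq_sqrt hDnn
    have hbroot : (A k + b) * (1 + A k * μ / 2) = 2 * L * b ^ 2 := by
      rw [← hs, hb]
      field_simp
      rw [show s * (s + A k * 8 * L) = s ^ 2 + 8 * L * A k * s by ring]
      nlinarith [hsq]
    have hbpos : 0 < b := by
      have h0 := Real.sqrt_nonneg (s ^ 2 + 8 * L * A k * s)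
      rw [hb]; positivity
    exact lt_of_lt_of_le hbpos (hgreater k b hbroot)
  have hAnn : ∀ k, 0 ≤ A k := by
    intro k
    induction k with
    | zero => simp [hA0]
    | succ n ih =>
      rw [hA n]
      have := halpha_pos n ih
      linarith
  have hApos : ∀ k, 1 ≤ k → 0 < A k := by
    intro k hk
    obtain ⟨n, rfl⟩ := Nat.exists_eq_add_of_le hk
    rw [add_comm, hA n]
    have := halpha_pos n (hAnn n)
    have := hAnn n
    linarith
  have hgrow : ∀ k, (1 + c) * A k ≤ A (k + 1) := by
    intro k
    have hAk := hAnn k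
    have hαpos := halpha_pos k hAk
    have hr := hroot k
    have hsq : (c * A k) ^ 2 ≤ α (k + 1) ^ 2 := by
      have h1 : (c * A k) ^ 2 = μ / (4 * L) * A k ^ 2 := by
        rw [mul_pow, hc2]
      have key : μ * A k ^ 2 ≤ 4 * L * α (k + 1) ^ 2 := by
        nlinarith [mul_nonneg (mul_nonneg hαpos.le hAk) hμ.le]
      rw [h1, div_mul_eq_mul_div, div_le_iff₀ (by positivity : (0:ℝ) < 4 * L)]
      linarith
    have hle : c * A k ≤ α (k + 1) := by
      have h1 : 0 ≤ c * A k := by positivity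
      nlinarith
    rw [hA k]; linarith
  -- decay
  have hdecay : ∀ d k, (1 + c) ^ d * A k ≤ A (k + d) := by
    intro d
    induction d with
    | zero => intro k; simp
    | succ n ih =>
      intro k
      have h1 := ih k
      have h2 := hgrow (k + n)
      calc (1 + c) ^ (n + 1) * A k = (1 + c) * ((1 + c) ^ n * A k) := by ring
        _ ≤ (1 + c) * A (k + n) := by
            apply mul_le_mul_of_nonneg_left h1 (by linarith)
        _ ≤ A (k + n + 1) := h2
        _ = A (k + (n + 1)) := by ring_nf
  intro N hN
  have hANpos : 0 < A N := hApos N hN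
  set r := 1 / (1 + c) with hr
  have hrpos : 0 < r := by rw [hr]; positivity
  have hrlt : r < 1 := by
    rw [hr, div_lt_one (by linarith)]; linarith
  -- each term bound
  have hterm : ∀ k ∈ Finset.range N, A (k + 1) ≤ A N * r ^ (N - 1 - k) := by
    intro k hk
    have hkN : k < N := Finset.mem_range.1 hk
    have hd := hdecay (N - 1 - k) (k + 1)
    have hidx : k + 1 + (N - 1 - k) = N := by omega
    rw [hidx] at hd
    have hpow : 0 < (1 + c) ^ (N - 1 - k) := by positivity
    rw [hr, div_pow, one_pow, mul_div_assoc', le_div_iff₀ hpow, mul_comm]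
    linarith
  have hsum : (∑ k ∈ Finset.range N, A (k + 1)) ≤ A N * ∑ i ∈ Finset.range N, r ^ i := by
    calc (∑ k ∈ Finset.range N, A (k + 1)) ≤ ∑ k ∈ Finset.range N, A N * r ^ (N - 1 - k) :=
          Finset.sum_le_sum hterm
      _ = A N * ∑ k ∈ Finset.range N, r ^ (N - 1 - k) := by rw [Finset.mul_sum]
      _ = A N * ∑ i ∈ Finset.range N, r ^ i := by
          congr 1
          rw [← Finset.sum_range_reflect]
          apply Finset.sum_congr rfl
          intro i hi
          congr 1
          have := Finset.mem_range.1 hi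
          omega
  have hgeom : (∑ i ∈ Finset.range N, r ^ i) ≤ (1 + c) / c := by
    have hr1 : r ≠ 1 := ne_of_lt hrlt
    rw [geom_sum_eq hr1]
    have hrN : 0 ≤ r ^ N := by positivity
    have h1mr : 1 - r = c / (1 + c) := by
      rw [hr]; field_simp; ring
    rw [div_le_iff_of_neg (by linarith : r - 1 < 0)]
    have : (1 + c) / c * (r - 1) = -((1 + c) / c * (1 - r)) := by ring
    rw [this, h1mr]
    have hcc : (1 + c) / c * (c / (1 + c)) = 1 := by
      field_simp
    rw [hcc]
    linarith
  have hinv : 2 * Real.sqrt (L / μ) = 1 / c := by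
    rw [hc, eq_div_iff (ne_of_gt hcpos), hc, mul_assoc, ← Real.sqrt_mul (by positivity)]
    have : L / μ * (μ / (4 * L)) = 1 / 4 := by field_simp
    rw [this]
    rw [show (1:ℝ)/4 = (1/2)^2 by norm_num, Real.sqrt_sq (by norm_num)]
    norm_num
  rw [div_le_iff₀ hANpos, hinv]
  calc (∑ k ∈ Finset.range N, A (k + 1)) ≤ A N * ∑ i ∈ Finset.range N, r ^ i := hsum
    _ ≤ A N * ((1 + c) / c) := by
        apply mul_le_mul_of_nonneg_left hgeom (le_of_lt hANpos)
    _ = (1 + 1 / c) * A N := by field_simp; ring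
end
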